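/- arXiv:2009.04649 — 2 statements merged into one kernel-verified Lean document; each statement's English description precedes it below -/
import Mathlib

section
/- Let A : ℕ → ℤ satisfy A(0)=1 and A(n) = A(n-1) + A(n-3) + A(n-4) for n ≥ 1 (with terms of negative index treated as 0). Let f(n) = F(n+1) be the shifted Fibonacci numbers with f(0)=1, f(1)=1, f(n+2)=f(n+1)+f(n). Then for all n ≥ 0, A(2n) = f(n)^2 and A(2n+1) = f(n)·f(n+1). -/
def f : ℕ → ℤ
  | 0 => 1
  | 1 => 1
  | n + 2 => f (n + 1) + f n

theorem stmt0 (A : ℕ → ℤ)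
    (h0 : A 0 = 1)
    (h1 : A 1 = A 0)
    (h2 : A 2 = A 1)
    (h3 : A 3 = A 2 + A 0)
    (hrec : ∀ n : ℕ, A (n + 4) = A (n + 3) + A (n + 1) + A n) :
    ∀ n : ℕ, A (2 * n) = (f n) ^ 2 ∧ A (2 * n + 1) = f n * f (n + 1) := by
  have key : ∀ n : ℕ,
      (A (2 * n) = (f n) ^ 2 ∧ A (2 * n + 1) = f n * f (n + 1)) ∧
      (A (2 * (n+1)) = (f (n+1)) ^ 2 ∧ A (2 * (n+1) + 1) = f (n+1) * f (n + 2)) := by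
    intro n
    induction n with
    | zero => simp [f, h0, h1, h2, h3]
    | succ k ih =>
      obtain ⟨⟨a0, a1⟩, a2, a3⟩ := ih
      refine ⟨⟨a2, a3⟩, ?_, ?_⟩
      · have := hrec (2 * k)
        have h4 : 2 * (k + 2) = 2 * k + 4 := by ring
        have h3' : 2 * k + 3 = 2 * (k+1) + 1 := by ring
        rw [h4, this, h3', a3, a1, a0, show f (k+2) = f (k+1) + f k from rfl]
        ring
      · have := hrec (2 * k + 1)
        have h5 : 2 * (k + 2) + 1 = 2 * k + 1 + 4 := by ring
        have h4' : 2 * k + 1 + 3 = 2 * (k + 2) := by ring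
        have h2' : 2 * k + 1 + 1 = 2 * (k + 1) := by ring
        rw [h5, this, h4', h2', a2, a1]
        have hA4 : A (2 * (k + 2)) = (f (k + 2)) ^ 2 := by
          have := hrec (2 * k)
          have h4 : 2 * (k + 2) = 2 * k + 4 := by ring
          have h3' : 2 * k + 3 = 2 * (k+1) + 1 := by ring
          rw [h4, this, h3', a3, a1, a0, show f (k+2) = f (k+1) + f k from rfl]
          ring
        rw [hA4, show f (k+3) = f (k+2) + f (k+1) from rfl,
            show f (k+2) = f (k+1) + f k from rfl]
        ring
  exact fun n => (key n).1
end

section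
/- Define T : ℕ → ℕ → ℕ by T(0,0)=1, T(n,k)=0 if k>n or k<0, T(n,0)=1 for all n, T(n,n)=1 if n even and 0 if n odd, and T(n,k) = T(n−1,k) + T(n−1,k−1) for n > k > 0. Then for all n ≥ k > 0, binom(n,k) = T(n,k) + T(n−1,k−1). -/
def T : ℕ → ℕ → ℕ
  | _, 0 => 1
  | 0, _ + 1 => 0
  | n + 1, k + 1 =>
    if n + 1 < k + 1 then 0
    else if k + 1 = n + 1 then (if (n + 1) % 2 = 0 then 1 else 0)
    else T n (k + 1) + T n k

lemma Tzero (n : ℕ) : T n 0 = 1 := by cases n <;> rfl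

lemma Trec (n k : ℕ) (hk : 0 < k) (hkn : k < n) :
    T n k = T (n - 1) k + T (n - 1) (k - 1) := by
  obtain ⟨m, rfl⟩ : ∃ m, n = m + 1 := ⟨n - 1, by omega⟩
  obtain ⟨j, rfl⟩ : ∃ j, k = j + 1 := ⟨k - 1, by omega⟩
  simp only [T]
  rw [if_neg (by omega), if_neg (by omega)]
  simp

lemma Tdiag (n : ℕ) : T n n = if n % 2 = 0 then 1 else 0 := by
  cases n with
  | zero => rfl
  | succ m => simp only [T]; rw [if_neg (by omega)]; simp

lemma Tone (n : ℕ) (h : 1 ≤ n) : T n 1 = n - 1 := by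
  induction n with
  | zero => omega
  | succ m ih =>
    rcases Nat.eq_or_lt_of_le h with h1 | h1
    · rw [← h1]; rfl
    · rw [Trec (m+1) 1 (by omega) (by omega)]
      simp only [Nat.add_sub_cancel]
      rw [ih (by omega), Tzero]
      omega

theorem stmt16 (n k : ℕ) (hk : 0 < k) (hkn : k ≤ n) :
    Nat.choose n k = T n k + T (n - 1) (k - 1) := by
  induction n generalizing k with
  | zero => omega
  | succ n ih =>
    rcases Nat.eq_or_lt_of_le hkn with h1 | h1
    · subst h1
      rw [Nat.choose_self, Tdiag, Nat.add_sub_cancel, Tdiag]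
      split_ifs <;> omega
    · -- k ≤ n
      have hkn' : k ≤ n := by omega
      rw [Trec (n+1) k hk (by omega), Nat.add_sub_cancel]
      obtain ⟨j, rfl⟩ : ∃ j, k = j + 1 := ⟨k - 1, by omega⟩
      rw [Nat.choose_succ_succ]
      rcases Nat.eq_zero_or_pos j with rfl | hj
      · simp only [Nat.choose_zero_right, Nat.add_sub_cancel, Tzero]
        rw [Tone n (by omega)]
        simp only [Nat.choose_one_right]
        omega
      · rw [ih (j+1) (by omega) hkn']
        have h2 : Nat.choose n j = T n j + T (n-1) (j-1) := ih j hj (by omega)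
        rw [h2]
        have h3 : T n j = T (n-1) j + T (n-1) (j-1) := Trec n j hj (by omega)
        simp only [Nat.add_sub_cancel]
        omega
end
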